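/- The negative derivative at λ = 0 of ν_λ(0) = [Σᵢ 1/sinh(√(2λ)Lᵢ)]/[Σᵢ coth(√(2λ)Lᵢ)] equals (Σᵢ Lᵢ)/(Σᵢ 1/Lᵢ). In particular, if all Lᵢ = L, this equals L². -/

import Mathlib

/-!
Put `s = √(2λ)`. Then `(ν_λ(0) - 1) / λ = -2 (Σᵢ (cosh sLᵢ - 1) / (s sinh sLᵢ)) / Σᵢ s coth sLᵢ`.
Since `(cosh x - 1) / sinh x = tanh (x / 2)`, both kinds of summand reduce to `sinh (s c) / s → c`:
the numerator tends to `-2 Σᵢ Lᵢ / 2` and the denominator to `Σᵢ 1 / Lᵢ`.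
-/

open Real Set

/-- The Laplace transform of the first exit time from the spider with leg lengths
`L₁,…,L_N`, extended continuously by `1` at `λ = 0`. -/
noncomputable def nuExit (N : ℕ) (L : Fin N → ℝ) (lam : ℝ) : ℝ :=
  if lam = 0 then 1 else
    (∑ j : Fin N, 1 / Real.sinh (Real.sqrt (2*lam) * L j)) /
      (∑ j : Fin N, Real.cosh (Real.sqrt (2*lam) * L j) /
        Real.sinh (Real.sqrt (2*lam) * L j))

open Filter Topology Finset

namespace Real

lemma tendsto_sinh_mul_div_self (c : ℝ) :
    Tendsto (fun s => sinh (s * c) / s) (𝓝[≠] 0) (𝓝 c) := by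
  have h := hasDerivAt_iff_tendsto_slope.mp
    ((hasDerivAt_sinh _).comp (0 : ℝ) ((hasDerivAt_id 0).mul_const c))
  simp only [id, zero_mul, cosh_zero, one_mul] at h
  exact h.congr fun s => by simp [slope_fun_def_field]

lemma tendsto_cosh_mul (c : ℝ) : Tendsto (fun s => cosh (s * c)) (𝓝 0) (𝓝 1) :=
  (by fun_prop : Continuous fun s => cosh (s * c)).tendsto' 0 1 (by simp)

lemma cosh_sub_one_div_sinh (x : ℝ) : (cosh x - 1) / sinh x = tanh (x / 2) := by
  have hx : x = 2 * (x / 2) := by ring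
  rw [tanh_eq_sinh_div_cosh, hx, cosh_two_mul, sinh_two_mul, cosh_sq, ← hx]
  rcases eq_or_ne (sinh (x / 2)) 0 with h | h
  · simp [h]
  · field_simp [(cosh_pos (x / 2)).ne']
    ring

lemma tendsto_cosh_sub_one_div_mul_sinh (c : ℝ) :
    Tendsto (fun s => (cosh (s * c) - 1) / (s * sinh (s * c))) (𝓝[≠] 0) (𝓝 (c / 2)) := by
  have h := (tendsto_sinh_mul_div_self (c / 2)).div
    ((tendsto_cosh_mul (c / 2)).mono_left nhdsWithin_le_nhds) one_ne_zero
  rw [div_one] at h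
  refine h.congr fun s => ?_
  have half := cosh_sub_one_div_sinh (s * c)
  rw [tanh_eq_sinh_div_cosh, mul_div_assoc] at half
  rw [Pi.div_apply, div_right_comm, ← half]
  ring

lemma tendsto_mul_cosh_div_sinh {c : ℝ} (hc : c ≠ 0) :
    Tendsto (fun s => s * (cosh (s * c) / sinh (s * c))) (𝓝[≠] 0) (𝓝 (1 / c)) := by
  refine (((tendsto_cosh_mul c).mono_left nhdsWithin_le_nhds).div
    (tendsto_sinh_mul_div_self c) hc).congr fun s => ?_
  rw [Pi.div_apply, div_div_eq_mul_div]
  ring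

end Real

section

variable {ι : Type*} [Fintype ι]

/-- The difference quotient `(ν_λ(0) - 1) / λ` at `λ = s² / 2`, split into summands that each
have a limit as `s → 0`. -/
noncomputable def exitQuotient (L : ι → ℝ) (s : ℝ) : ℝ :=
  -2 * (∑ i, (cosh (s * L i) - 1) / (s * sinh (s * L i))) /
    ∑ i, s * (cosh (s * L i) / sinh (s * L i))

lemma tendsto_exitQuotient {L : ι → ℝ} (hL : ∀ i, L i ≠ 0) (hsum : ∑ i, 1 / L i ≠ 0) :
    Tendsto (exitQuotient L) (𝓝[≠] 0) (𝓝 (-((∑ i, L i) / ∑ i, 1 / L i))) := by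
  have hnum := tendsto_finsetSum univ fun i _ => tendsto_cosh_sub_one_div_mul_sinh (L i)
  have hden := tendsto_finsetSum univ fun i _ => tendsto_mul_cosh_div_sinh (hL i)
  have hlim : -2 * (∑ i, L i / 2) / ∑ i, 1 / L i = -((∑ i, L i) / ∑ i, 1 / L i) := by
    rw [← sum_div]
    ring
  exact hlim ▸ (hnum.const_mul (-2)).div hden hsum

lemma sum_cosh_div_sinh_pos [Nonempty ι] {L : ι → ℝ} (hL : ∀ i, 0 < L i) {s : ℝ} (hs : 0 < s) :
    0 < ∑ i, cosh (s * L i) / sinh (s * L i) :=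
  sum_pos (fun i _ => div_pos (cosh_pos _) (sinh_pos_iff.mpr (mul_pos hs (hL i))))
    univ_nonempty

end

lemma slope_nuExit_zero {N : ℕ} {L : Fin N → ℝ} {lam : ℝ} (hlam : 0 < lam)
    (hDen : ∑ i, cosh (√(2 * lam) * L i) / sinh (√(2 * lam) * L i) ≠ 0) :
    slope (nuExit N L) 0 lam = exitQuotient L √(2 * lam) := by
  rw [slope_def_field, nuExit, nuExit, if_neg hlam.ne', if_pos rfl, exitQuotient, ← mul_sum,
    sub_zero]
  set s := √(2 * lam)
  have hs : lam = s ^ 2 / 2 := by rw [sq_sqrt (by positivity)]; ring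
  have hs0 : s ≠ 0 := (sqrt_pos.mpr (by positivity)).ne'
  have hnum : ∑ i, (cosh (s * L i) - 1) / (s * sinh (s * L i)) =
      ((∑ i, cosh (s * L i) / sinh (s * L i)) - ∑ i, 1 / sinh (s * L i)) / s := by
    rw [← sum_sub_distrib, sum_div]
    refine sum_congr rfl fun i _ => ?_
    rw [div_sub_div_same, div_div, mul_comm (sinh _)]
  rw [hnum, hs]
  field_simp
  ring

/-- The negative one-sided derivative at `λ = 0` of `ν_λ(0)` equals `(Σᵢ Lᵢ)/(Σᵢ 1/Lᵢ)`
(the mean exit time); in particular it equals `L²` when all legs have the same length `L`. -/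
theorem nuExit_neg_deriv_at_zero (N : ℕ) (hN : 1 ≤ N) (L : Fin N → ℝ) (hL : ∀ i, 0 < L i) :
    HasDerivWithinAt (nuExit N L)
        (-((∑ i : Fin N, L i) / (∑ i : Fin N, 1 / L i))) (Ici (0:ℝ)) 0 ∧
      (∀ c : ℝ, (∀ i, L i = c) →
        (∑ i : Fin N, L i) / (∑ i : Fin N, 1 / L i) = c ^ 2) := by
  have : Nonempty (Fin N) := Fin.pos_iff_nonempty.mp hN
  refine ⟨?_, fun c hc => ?_⟩
  · have hlim := tendsto_exitQuotient (fun i => (hL i).ne')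
      (sum_pos (fun i _ => one_div_pos.mpr (hL i)) univ_nonempty).ne'
    have hsqrt : Tendsto (fun lam : ℝ => √(2 * lam)) (𝓝[>] 0) (𝓝[>] 0) := by
      refine tendsto_nhdsWithin_iff.mpr ⟨?_, ?_⟩
      · exact ((by fun_prop : Continuous fun lam : ℝ => √(2 * lam)).tendsto' 0 0
          (by simp)).mono_left nhdsWithin_le_nhds
      · filter_upwards [self_mem_nhdsWithin] with lam hlam
        exact sqrt_pos.mpr (by simpa using hlam)
    rw [hasDerivWithinAt_iff_tendsto_slope, Ici_sdiff_left]
    refine ((hlim.mono_left (nhdsGT_le_nhdsNE 0)).comp hsqrt).congr' ?_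
    filter_upwards [self_mem_nhdsWithin] with lam hlam
    exact (slope_nuExit_zero hlam
      (sum_cosh_div_sinh_pos hL (sqrt_pos.mpr (by simpa using hlam))).ne').symm
  · simp only [hc, sum_const, card_univ, Fintype.card_fin, nsmul_eq_mul]
    rw [mul_div_mul_left _ _ (by positivity), div_div_eq_mul_div, div_one, sq]
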